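/- Let i₁, i₂, i₃ be positive integers with i₃ > i₂ ≥ i₁ ≥ 1. Then the triple integral ∫₀¹ ∫₀¹ ∫₀¹ 1/(x₁^{i₁}·x₂^{i₂}·x₃^{i₃} + q) dx₃ dx₂ dx₁ satisfies ∫₀¹ ∫₀¹ ∫₀¹ 1/(x₁^{i₁}·x₂^{i₂}·x₃^{i₃} + q) dx₃ dx₂ dx₁ = Θ(q^(−1 + 1/i₃)) as q → 0⁺. -/

import Mathlib

/-!
The substitution `x = (q / b) ^ (1 / n) * t` turns `∫₀¹ dx / (b xⁿ + q)` into
`q ^ (-1 + 1/n) * b ^ (-1/n) * ∫₀^{(b/q)^(1/n)} dt / (tⁿ + 1)`. For `n ≥ 2` the last integral is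
at most `π` (compare with `2 / (1 + t²)`), and at least `1/2` once the upper limit is `≥ 1`.
Applied with `b = x₁^i₁ x₂^i₂` and `n = i₃`, the upper bound leaves `x₁^(-i₁/i₃) x₂^(-i₂/i₃)`,
which is integrable over the unit square because `i₁, i₂ < i₃`; for the lower bound, the inner
integral decreases in `b`, so `b = x₁^i₁ x₂^i₂ ≤ 1` may be replaced by `1`.
-/

open MeasureTheory Filter Topology

def IsThetaAtZero (I R : ℝ → ℝ) : Prop :=
  ∃ c C q₀ : ℝ, 0 < c ∧ c ≤ C ∧ 0 < q₀ ∧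
    ∀ q : ℝ, 0 < q → q < q₀ → c * R q ≤ I q ∧ I q ≤ C * R q

open Set intervalIntegral Real
open scoped Interval

lemma intervalIntegrable_one_div_mul_pow_add (n : ℕ) {b q c : ℝ} (hb : 0 ≤ b) (hq : 0 < q)
    (hc : 0 ≤ c) : IntervalIntegrable (fun x => 1 / (b * x ^ n + q)) volume 0 c := by
  refine ContinuousOn.intervalIntegrable (continuousOn_const.div (by fun_prop) fun x hx => ?_)
  rw [uIcc_of_le hc] at hx
  have := pow_nonneg hx.1 n
  positivity

lemma intervalIntegrable_one_div_pow_add_one (n : ℕ) {c : ℝ} (hc : 0 ≤ c) :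
    IntervalIntegrable (fun t => 1 / (t ^ n + 1)) volume 0 c := by
  simpa using intervalIntegrable_one_div_mul_pow_add n zero_le_one one_pos hc

lemma one_div_pow_add_one_le_two_mul_one_div_one_add_sq {n : ℕ} (hn : 2 ≤ n) {t : ℝ}
    (ht : 0 ≤ t) : 1 / (t ^ n + 1) ≤ 2 * (1 / (1 + t ^ 2)) := by
  rw [← mul_div_assoc, mul_one]
  rcases le_total t 1 with ht1 | ht1
  · calc 1 / (t ^ n + 1) ≤ 1 := div_le_one_of_le₀ (by linarith [pow_nonneg ht n]) (by positivity)
      _ ≤ 2 / (1 + t ^ 2) := by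
        rw [le_div_iff₀ (by positivity)]; nlinarith [pow_le_one₀ ht ht1 (n := 2)]
  · calc 1 / (t ^ n + 1) ≤ 1 / (1 + t ^ 2) := by
          rw [add_comm]; gcongr
      _ ≤ 2 / (1 + t ^ 2) := by gcongr; norm_num

lemma integral_one_div_pow_add_one_le_pi {n : ℕ} (hn : 2 ≤ n) {c : ℝ} (hc : 0 ≤ c) :
    ∫ t in (0:ℝ)..c, 1 / (t ^ n + 1) ≤ π := by
  have hsq : Continuous fun t : ℝ => 1 / (1 + t ^ 2) :=
    continuous_const.div (by fun_prop) fun t => by positivity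
  calc ∫ t in (0:ℝ)..c, 1 / (t ^ n + 1)
      ≤ ∫ t in (0:ℝ)..c, 2 * (1 / (1 + t ^ 2)) :=
        integral_mono_on hc (intervalIntegrable_one_div_pow_add_one n hc)
          ((hsq.intervalIntegrable _ _).const_mul 2)
          fun t ht => one_div_pow_add_one_le_two_mul_one_div_one_add_sq hn ht.1
    _ = 2 * arctan c := by simp
    _ ≤ π := by linarith [arctan_lt_pi_div_two c]

lemma half_le_integral_one_div_pow_add_one (n : ℕ) {c : ℝ} (hc : 1 ≤ c) :
    1 / 2 ≤ ∫ t in (0:ℝ)..c, 1 / (t ^ n + 1) := by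
  calc (1 / 2 : ℝ) = ∫ _ in (0:ℝ)..1, (1 / 2 : ℝ) := by simp
    _ ≤ ∫ t in (0:ℝ)..1, 1 / (t ^ n + 1) :=
        integral_mono_on zero_le_one intervalIntegrable_const
          (intervalIntegrable_one_div_pow_add_one n zero_le_one) fun t ht => by
          have := pow_nonneg ht.1 n
          simpa using one_div_le_one_div_of_le (by positivity)
            (by linarith [pow_le_one₀ ht.1 ht.2 (n := n)] : t ^ n + 1 ≤ 2)
    _ ≤ ∫ t in (0:ℝ)..c, 1 / (t ^ n + 1) :=
        integral_mono_interval le_rfl zero_le_one hc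
          (ae_restrict_of_forall_mem measurableSet_Ioc fun t ht => by
            have := pow_nonneg ht.1.le n; positivity)
          (intervalIntegrable_one_div_pow_add_one n (by linarith))

noncomputable def invMonomialIntegral (n : ℕ) (q b : ℝ) : ℝ :=
  ∫ x in (0:ℝ)..1, 1 / (b * x ^ n + q)

lemma invMonomialIntegral_eq_of_mul_pow_eq (n : ℕ) {q b c : ℝ} (hc : 0 < c)
    (hcb : q * c ^ n = b) :
    invMonomialIntegral n q b = (q * c)⁻¹ * ∫ t in (0:ℝ)..c, 1 / (t ^ n + 1) := by
  have hscale : ∀ x : ℝ, 1 / (b * x ^ n + q) = q⁻¹ * (1 / ((c * x) ^ n + 1)) := fun x => by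
    rw [← hcb, one_div, one_div, ← mul_inv]; ring
  simp only [invMonomialIntegral, hscale, intervalIntegral.integral_const_mul,
    integral_comp_mul_left (fun t => 1 / (t ^ n + 1)) hc.ne', mul_zero, mul_one, smul_eq_mul]
  ring

lemma inv_mul_rpow_div_eq {n : ℝ} {q b : ℝ} (hq : 0 < q) (hb : 0 < b) :
    (q * (b / q) ^ (1 / n))⁻¹ = q ^ (-1 + 1 / n) * b ^ (-(1 / n)) := by
  rw [div_rpow hb.le hq.le, rpow_add hq, rpow_neg_one, rpow_neg hb.le]
  have := rpow_pos_of_pos hq (1 / n)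
  have := rpow_pos_of_pos hb (1 / n)
  field_simp

lemma mul_rpow_div_pow_eq {n : ℕ} (hn : n ≠ 0) {q b : ℝ} (hq : 0 < q) (hb : 0 ≤ b) :
    q * ((b / q) ^ (1 / (n : ℝ))) ^ n = b := by
  rw [one_div, rpow_inv_natCast_pow (by positivity) hn]
  field_simp

theorem invMonomialIntegral_le {n : ℕ} (hn : 2 ≤ n) {q b : ℝ} (hq : 0 < q) (hb : 0 < b) :
    invMonomialIntegral n q b ≤ π * q ^ (-1 + 1 / (n : ℝ)) * b ^ (-(1 / (n : ℝ))) := by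
  have hc : 0 < (b / q) ^ (1 / (n : ℝ)) := by positivity
  rw [invMonomialIntegral_eq_of_mul_pow_eq n hc (mul_rpow_div_pow_eq (by omega) hq hb.le),
    inv_mul_rpow_div_eq hq hb]
  exact (mul_le_mul_of_nonneg_left (integral_one_div_pow_add_one_le_pi hn hc.le)
    (by positivity)).trans_eq (by ring)

theorem le_invMonomialIntegral {n : ℕ} (hn : n ≠ 0) {q b : ℝ} (hq : 0 < q) (hqb : q ≤ b) :
    1 / 2 * q ^ (-1 + 1 / (n : ℝ)) * b ^ (-(1 / (n : ℝ))) ≤ invMonomialIntegral n q b := by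
  have hb : 0 < b := hq.trans_le hqb
  have hc : 1 ≤ (b / q) ^ (1 / (n : ℝ)) :=
    one_le_rpow ((one_le_div hq).2 hqb) (by positivity)
  rw [invMonomialIntegral_eq_of_mul_pow_eq n (by positivity) (mul_rpow_div_pow_eq hn hq hb.le),
    inv_mul_rpow_div_eq hq hb]
  exact (mul_le_mul_of_nonneg_left (half_le_integral_one_div_pow_add_one n hc)
    (by positivity)).trans_eq' (by ring)

lemma intervalIntegrable_of_norm_le {f : ℝ → ℝ} {a b C : ℝ} (hf : Measurable f)
    (h : ∀ x ∈ Ι a b, ‖f x‖ ≤ C) : IntervalIntegrable f volume a b :=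
  intervalIntegrable_const.mono_fun' hf.aestronglyMeasurable
    (ae_restrict_of_forall_mem measurableSet_uIoc h)

lemma measurable_intervalIntegral_of_uncurry {α : Type*} [MeasurableSpace α] {f : α → ℝ → ℝ}
    (hf : Measurable (Function.uncurry f)) (a b : ℝ) :
    Measurable fun x => ∫ y in a..b, f x y :=
  (hf.stronglyMeasurable.integral_prod_right.measurable).sub
    hf.stronglyMeasurable.integral_prod_right.measurable

lemma le_integral_of_forall_le {f : ℝ → ℝ} {L : ℝ} (hf : IntervalIntegrable f volume 0 1)
    (h : ∀ x ∈ Icc (0:ℝ) 1, L ≤ f x) : L ≤ ∫ x in (0:ℝ)..1, f x := by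
  simpa using integral_mono_on zero_le_one intervalIntegrable_const hf h

lemma integral_le_of_le_mul_rpow_neg {f : ℝ → ℝ} {K e : ℝ} (he : e < 1)
    (hf : IntervalIntegrable f volume 0 1) (h : ∀ x ∈ Ioo (0:ℝ) 1, f x ≤ K * x ^ (-e)) :
    ∫ x in (0:ℝ)..1, f x ≤ K / (1 - e) := by
  have hpow : -1 < -e := by linarith
  calc ∫ x in (0:ℝ)..1, f x ≤ ∫ x in (0:ℝ)..1, K * x ^ (-e) :=
        integral_mono_on_of_le_Ioo zero_le_one hf
          ((intervalIntegrable_rpow' hpow).const_mul K) h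
    _ = K / (1 - e) := by
        rw [intervalIntegral.integral_const_mul, integral_rpow (Or.inl hpow), one_rpow,
          zero_rpow (by linarith), neg_add_eq_sub]
        ring

lemma pow_rpow_neg_one_div {x : ℝ} (hx : 0 ≤ x) (a : ℕ) (n : ℝ) :
    (x ^ a) ^ (-(1 / n)) = x ^ (-(a / n)) := by
  rw [← rpow_natCast, ← rpow_mul hx]
  ring_nf

section Monomial

variable {n : ℕ} {q b : ℝ}

lemma invMonomialIntegral_le_of_le (hq : 0 < q) {b' : ℝ} (hb : 0 ≤ b) (hbb' : b ≤ b') :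
    invMonomialIntegral n q b' ≤ invMonomialIntegral n q b :=
  integral_mono_on zero_le_one
    (intervalIntegrable_one_div_mul_pow_add n (hb.trans hbb') hq zero_le_one)
    (intervalIntegrable_one_div_mul_pow_add n hb hq zero_le_one) fun x hx => by
      have := pow_nonneg hx.1 n
      exact one_div_le_one_div_of_le (by positivity) (by gcongr)

lemma norm_invMonomialIntegral_le (hq : 0 < q) (hb : 0 ≤ b) :
    ‖invMonomialIntegral n q b‖ ≤ 1 / q := by
  have hnonneg : 0 ≤ invMonomialIntegral n q b :=
    integral_nonneg zero_le_one fun x hx => by have := pow_nonneg hx.1 n; positivity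
  rw [norm_of_nonneg hnonneg]
  simpa [invMonomialIntegral] using invMonomialIntegral_le_of_le (n := n) hq le_rfl hb

lemma measurable_invMonomialIntegral (n : ℕ) (q : ℝ) : Measurable (invMonomialIntegral n q) :=
  measurable_intervalIntegral_of_uncurry (by fun_prop) 0 1

end Monomial

-- Definitionally the triple integral of the theorem: `x₁ ^ a * x₂ ^ b * x₃ ^ n` parses as
-- `(x₁ ^ a * x₂ ^ b) * x₃ ^ n`, so the innermost integral is
-- `invMonomialIntegral n q (x₁ ^ a * x₂ ^ b)`.
noncomputable def iteratedInvMonomialIntegral (a b n : ℕ) (q : ℝ) : ℝ :=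
  ∫ x₁ in (0:ℝ)..1, ∫ x₂ in (0:ℝ)..1, invMonomialIntegral n q (x₁ ^ a * x₂ ^ b)

section Iterated

variable {a b n : ℕ} {q : ℝ}

lemma intervalIntegrable_invMonomialIntegral_mul_pow (hq : 0 < q) {x₁ : ℝ} (hx₁ : 0 ≤ x₁) :
    IntervalIntegrable (fun x₂ => invMonomialIntegral n q (x₁ ^ a * x₂ ^ b)) volume 0 1 :=
  intervalIntegrable_of_norm_le ((measurable_invMonomialIntegral n q).comp (by fun_prop))
    fun x₂ hx₂ => norm_invMonomialIntegral_le hq <| by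
      rw [uIoc_of_le zero_le_one] at hx₂
      exact mul_nonneg (pow_nonneg hx₁ a) (pow_nonneg hx₂.1.le b)

lemma intervalIntegrable_integral_invMonomialIntegral_mul_pow (hq : 0 < q) :
    IntervalIntegrable
      (fun x₁ => ∫ x₂ in (0:ℝ)..1, invMonomialIntegral n q (x₁ ^ a * x₂ ^ b)) volume 0 1 :=
  intervalIntegrable_of_norm_le
    (measurable_intervalIntegral_of_uncurry
      (f := fun x₁ x₂ => invMonomialIntegral n q (x₁ ^ a * x₂ ^ b))
      ((measurable_invMonomialIntegral n q).comp (by fun_prop)) 0 1)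
    fun x₁ hx₁ => by
      rw [uIoc_of_le zero_le_one] at hx₁
      simpa using norm_integral_le_of_norm_le_const fun x₂ hx₂ =>
        norm_invMonomialIntegral_le (n := n) hq <| by
          rw [uIoc_of_le zero_le_one] at hx₂
          exact mul_nonneg (pow_nonneg hx₁.1.le a) (pow_nonneg hx₂.1.le b)

theorem le_iteratedInvMonomialIntegral (hn : n ≠ 0) (hq : 0 < q) (hq1 : q ≤ 1) :
    1 / 2 * q ^ (-1 + 1 / (n : ℝ)) ≤ iteratedInvMonomialIntegral a b n q := by
  have hlow : 1 / 2 * q ^ (-1 + 1 / (n : ℝ)) ≤ invMonomialIntegral n q 1 := by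
    simpa using le_invMonomialIntegral hn hq hq1
  refine le_integral_of_forall_le (intervalIntegrable_integral_invMonomialIntegral_mul_pow hq)
    fun x₁ hx₁ => le_integral_of_forall_le
      (intervalIntegrable_invMonomialIntegral_mul_pow hq hx₁.1) fun x₂ hx₂ =>
        hlow.trans <| invMonomialIntegral_le_of_le hq
          (mul_nonneg (pow_nonneg hx₁.1 a) (pow_nonneg hx₂.1 b))
          (mul_le_one₀ (pow_le_one₀ hx₁.1 hx₁.2) (pow_nonneg hx₂.1 b) (pow_le_one₀ hx₂.1 hx₂.2))

theorem iteratedInvMonomialIntegral_le (hn : 2 ≤ n) (ha : a < n) (hb : b < n) (hq : 0 < q) :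
    iteratedInvMonomialIntegral a b n q ≤
      π / (1 - b / (n : ℝ)) / (1 - a / (n : ℝ)) * q ^ (-1 + 1 / (n : ℝ)) := by
  have hn0 : (0 : ℝ) < n := by positivity
  have hlt : ∀ {k : ℕ}, k < n → (k : ℝ) / n < 1 := fun hk => by
    rw [div_lt_one hn0]; exact_mod_cast hk
  have hinner : ∀ x₁ ∈ Ioo (0:ℝ) 1, ∀ x₂ ∈ Ioo (0:ℝ) 1,
      invMonomialIntegral n q (x₁ ^ a * x₂ ^ b) ≤
        π * q ^ (-1 + 1 / (n : ℝ)) * x₁ ^ (-(a / (n : ℝ))) * x₂ ^ (-(b / (n : ℝ))) :=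
    fun x₁ hx₁ x₂ hx₂ => by
      have h := invMonomialIntegral_le hn hq (mul_pos (pow_pos hx₁.1 a) (pow_pos hx₂.1 b))
      rwa [mul_rpow (pow_nonneg hx₁.1.le a) (pow_nonneg hx₂.1.le b),
        pow_rpow_neg_one_div hx₁.1.le, pow_rpow_neg_one_div hx₂.1.le, ← mul_assoc] at h
  refine (integral_le_of_le_mul_rpow_neg (K := π / (1 - b / n) * q ^ (-1 + 1 / (n : ℝ)))
    (hlt ha) (intervalIntegrable_integral_invMonomialIntegral_mul_pow hq)
    fun x₁ hx₁ => ?_).trans_eq (by ring)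
  calc ∫ x₂ in (0:ℝ)..1, invMonomialIntegral n q (x₁ ^ a * x₂ ^ b)
      ≤ π * q ^ (-1 + 1 / (n : ℝ)) * x₁ ^ (-(a / (n : ℝ))) / (1 - b / n) :=
        integral_le_of_le_mul_rpow_neg (hlt hb)
          (intervalIntegrable_invMonomialIntegral_mul_pow hq hx₁.1.le) (hinner x₁ hx₁)
    _ = π / (1 - b / (n : ℝ)) * q ^ (-1 + 1 / (n : ℝ)) * x₁ ^ (-(a / (n : ℝ))) := by ring

end Iterated

lemma IsThetaAtZero.of_bounds {I R : ℝ → ℝ} {c C q₀ : ℝ} (hc : 0 < c) (hq₀ : 0 < q₀)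
    (hR : ∀ q, 0 < q → q < q₀ → 0 ≤ R q)
    (h : ∀ q, 0 < q → q < q₀ → c * R q ≤ I q ∧ I q ≤ C * R q) : IsThetaAtZero I R :=
  ⟨c, max c C, q₀, hc, le_max_left c C, hq₀, fun q hq hqq₀ =>
    ⟨(h q hq hqq₀).1,
      (h q hq hqq₀).2.trans (by gcongr; exacts [hR q hq hqq₀, le_max_right c C])⟩⟩

/-- Theorem 4.4, Cases 1, 2, 5, 6: for positive integers
`i₃ > i₂ ≥ i₁ ≥ 1`,
`∫₀¹ ∫₀¹ ∫₀¹ 1/(x₁^{i₁}·x₂^{i₂}·x₃^{i₃} + q) dx₃ dx₂ dx₁ = Θ(q^(−1 + 1/i₃))`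
as `q → 0⁺`. -/
theorem three_dim_monomial_scaling_strict_max (i₁ i₂ i₃ : ℕ)
    (h1 : 1 ≤ i₁) (h2 : i₁ ≤ i₂) (h3 : i₂ < i₃) :
    IsThetaAtZero
      (fun q : ℝ => ∫ x₁ in (0:ℝ)..1, ∫ x₂ in (0:ℝ)..1, ∫ x₃ in (0:ℝ)..1,
        1 / (x₁ ^ i₁ * x₂ ^ i₂ * x₃ ^ i₃ + q))
      (fun q : ℝ => q ^ (-1 + 1/(i₃:ℝ))) :=
  IsThetaAtZero.of_bounds (I := iteratedInvMonomialIntegral i₁ i₂ i₃) one_half_pos one_pos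
    (fun q hq _ => (rpow_pos_of_pos hq _).le) fun q hq hq1 =>
      ⟨le_iteratedInvMonomialIntegral (by omega) hq hq1.le,
        iteratedInvMonomialIntegral_le (by omega) (by omega) h3 hq⟩
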